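/- Let (d_n) be integers with 1 ≤ d_n ≤ n, d_n → ∞, and suppose for some k ∈ ℕ that d_n^{k+1}/n → 0. Let λ_n ∈ (0,1) satisfy 1 − λ_n = (ξ_n + log d_n)/d_n^{k}, where the real sequence (ξ_n) satisfies ξ_n²/d_n → 0 and either (a) ξ_n → −log α for some α ∈ (0,∞), or (b) ξ_n → +∞ and α = 0. Then, with μ_n the associated near fixed point, μ_{n,k} → 1 and β'_n(μ_{n,k}) → α as n → ∞. -/

import Mathlib

open Filter Topology

/-- `β_n(x) = ∏_{i=0}^{d−1} ((x − i/n)/(1 − i/n))⁺`. -/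
noncomputable def betaFn (n d : ℕ) (x : ℝ) : ℝ :=
  ∏ i ∈ Finset.range d, max ((x - (i : ℝ) / (n : ℝ)) / (1 - (i : ℝ) / (n : ℝ))) 0

/-- The derivative `β'_n` of `β_n` away from `(d−1)/n`, set to `0` for
`x ≤ (d−1)/n`. -/
noncomputable def betaDeriv (n d : ℕ) (x : ℝ) : ℝ :=
  if ((d : ℝ) - 1) / (n : ℝ) < x then
    ∑ j ∈ Finset.range d, (1 - (j : ℝ) / (n : ℝ))⁻¹ *
      ∏ i ∈ (Finset.range d).erase j, (x - (i : ℝ) / (n : ℝ)) / (1 - (i : ℝ) / (n : ℝ))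
  else 0


/-- The near fixed point: `muSeq n d lam i` is the paper's `μ_{n,i+1}`, i.e.
`μ_{n,1} = λ_n` and `μ_{n,i+1} = λ_n β_n(μ_{n,i})`. -/
noncomputable def muSeq (n d : ℕ) (lam : ℝ) : ℕ → ℝ
  | 0 => lam
  | i + 1 => lam * betaFn n d (muSeq n d lam i)

lemma prod_le_const_pow {ι : Type*} {s : Finset ι} {f : ι → ℝ} {c : ℝ}
    (h0 : ∀ i ∈ s, 0 ≤ f i) (h : ∀ i ∈ s, f i ≤ c) : ∏ i ∈ s, f i ≤ c ^ s.card := by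
  calc ∏ i ∈ s, f i ≤ ∏ _i ∈ s, c := Finset.prod_le_prod h0 h
  _ = c ^ s.card := Finset.prod_const c

lemma const_pow_le_prod {ι : Type*} {s : Finset ι} {f : ι → ℝ} {c : ℝ}
    (hc : 0 ≤ c) (h : ∀ i ∈ s, c ≤ f i) : c ^ s.card ≤ ∏ i ∈ s, f i := by
  calc (c:ℝ) ^ s.card = ∏ _i ∈ s, c := (Finset.prod_const c).symm
  _ ≤ ∏ i ∈ s, f i := Finset.prod_le_prod (fun i _ => hc) h

lemma pow_le_quad (d : ℕ) (t : ℝ) (h0 : 0 ≤ t) (h1 : t ≤ 1) :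
    (1 - t)^d ≤ 1 - d*t + (d:ℝ)^2*t^2/2 := by
  induction d with
  | zero => simp
  | succ m ih =>
    have h2 : (0:ℝ) ≤ 1 - t := by linarith
    calc (1-t)^(m+1) = (1-t)*(1-t)^m := by ring
    _ ≤ (1-t)*(1 - m*t + (m:ℝ)^2*t^2/2) := mul_le_mul_of_nonneg_left ih h2
    _ ≤ 1 - (↑(m+1))*t + (↑(m+1):ℝ)^2*t^2/2 := by
        push_cast
        nlinarith [sq_nonneg t, sq_nonneg ((m:ℝ)*t),
          mul_nonneg (mul_nonneg (sq_nonneg (m:ℝ)) (sq_nonneg t)) h0]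

lemma neg_log_bound {t : ℝ} (h0 : 0 ≤ t) (h1 : t ≤ 1/2) :
    -t - 2*t^2 ≤ Real.log (1 - t) ∧ Real.log (1 - t) ≤ -t := by
  have ht : (0:ℝ) < 1 - t := by linarith
  constructor
  · have h2 := Real.log_le_sub_one_of_pos (x := (1-t)⁻¹) (by positivity)
    rw [Real.log_inv] at h2
    have h3 : (1-t)⁻¹ - 1 = t / (1-t) := by field_simp; ring
    have h4 : t / (1-t) ≤ t + 2*t^2 := by
      rw [div_le_iff₀ ht]; nlinarith
    nlinarith
  · have h2 := Real.log_le_sub_one_of_pos ht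
    linarith

section facts
variable {n d : ℕ}

lemma denom_pos (hn : 1 ≤ n) (hdn : d ≤ n) {i : ℕ} (hi : i < d) : 0 < 1 - (i:ℝ)/n := by
  have h1 : (i:ℝ) < n := by exact_mod_cast lt_of_lt_of_le hi hdn
  have h2 : (0:ℝ) < n := by exact_mod_cast hn
  have := (div_lt_one h2).2 h1
  linarith

lemma denom_ge (hn : 1 ≤ n) (hdn : d ≤ n) {i : ℕ} (hi : i < d) :
    1 - ((d:ℝ)-1)/n ≤ 1 - (i:ℝ)/n := by
  have h2 : (0:ℝ) < n := by exact_mod_cast hn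
  have h1 : (i:ℝ) ≤ (d:ℝ) - 1 := by
    have : (i:ℝ) + 1 ≤ d := by exact_mod_cast hi
    linarith
  gcongr

lemma rmargin_pos (hn : 1 ≤ n) (hdn : d ≤ n) : 0 < 1 - ((d:ℝ)-1)/n := by
  have h2 : (0:ℝ) < n := by exact_mod_cast hn
  have h1 : (d:ℝ) - 1 < n := by
    have : (d:ℝ) ≤ n := by exact_mod_cast hdn
    linarith
  have := (div_lt_one h2).2 h1
  linarith

lemma factor_eq (hn : 1 ≤ n) (hdn : d ≤ n) {i : ℕ} (hi : i < d) (δ : ℝ) :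
    ((1 - δ) - (i:ℝ)/n) / (1 - (i:ℝ)/n) = 1 - δ / (1 - (i:ℝ)/n) := by
  have h := denom_pos hn hdn hi
  rw [div_eq_iff (ne_of_gt h), sub_mul, one_mul, div_mul_cancel₀ _ (ne_of_gt h)]
  ring

lemma betaFn_le (hn : 1 ≤ n) (hdn : d ≤ n) {δ : ℝ} (h0 : 0 ≤ δ) (h1 : δ ≤ 1) :
    betaFn n d (1-δ) ≤ (1-δ)^d := by
  rw [betaFn]
  refine le_trans (prod_le_const_pow (fun i _ => le_max_right _ _) ?_)
    (le_of_eq (by rw [Finset.card_range]))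
  intro i hi
  rw [Finset.mem_range] at hi
  have hp := denom_pos hn hdn hi
  rw [factor_eq hn hdn hi]
  apply max_le _ (by linarith)
  have : δ ≤ δ / (1 - (i:ℝ)/n) := by
    rw [le_div_iff₀ hp]
    nlinarith [div_nonneg (Nat.cast_nonneg i) (Nat.cast_nonneg n : (0:ℝ) ≤ n)]
  linarith

lemma le_betaFn (hn : 1 ≤ n) (hdn : d ≤ n) {δ : ℝ} (h0 : 0 ≤ δ)
    (h2 : δ / (1 - ((d:ℝ)-1)/n) ≤ 1) :
    (1 - δ/(1 - ((d:ℝ)-1)/n))^d ≤ betaFn n d (1-δ) := by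
  rw [betaFn]
  refine le_trans (le_of_eq (by rw [Finset.card_range]))
    (const_pow_le_prod (by linarith) ?_)
  intro i hi
  rw [Finset.mem_range] at hi
  have hp := denom_pos hn hdn hi
  have hge := denom_ge hn hdn hi
  have hr := rmargin_pos hn hdn
  rw [factor_eq hn hdn hi]
  refine le_trans ?_ (le_max_left _ _)
  have : δ / (1 - (i:ℝ)/n) ≤ δ / (1 - ((d:ℝ)-1)/n) := by gcongr
  linarith

lemma betaFn_zero_le (n d : ℕ) (x : ℝ) : 0 ≤ betaFn n d x :=
  Finset.prod_nonneg fun i _ => le_max_right _ _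

lemma betaFn_le_one (hn : 1 ≤ n) (hdn : d ≤ n) {x : ℝ} (hx : x ≤ 1) : betaFn n d x ≤ 1 := by
  apply Finset.prod_le_one (fun i _ => le_max_right _ _)
  intro i hi
  rw [Finset.mem_range] at hi
  have hp := denom_pos hn hdn hi
  apply max_le _ zero_le_one
  rw [div_le_one hp]
  linarith

lemma muSeq_mem (hn : 1 ≤ n) (hdn : d ≤ n) {lam : ℝ} (h : lam ∈ Set.Ioo (0:ℝ) 1) :
    ∀ i, 0 ≤ muSeq n d lam i ∧ muSeq n d lam i ≤ lam := by
  intro i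
  induction i with
  | zero => exact ⟨h.1.le, le_rfl⟩
  | succ m ih =>
    refine ⟨mul_nonneg h.1.le (betaFn_zero_le n d _), ?_⟩
    have hb : betaFn n d (muSeq n d lam m) ≤ 1 := betaFn_le_one hn hdn (ih.2.trans h.2.le)
    calc lam * betaFn n d (muSeq n d lam m) ≤ lam * 1 :=
          mul_le_mul_of_nonneg_left hb h.1.le
    _ = lam := mul_one lam

end facts

lemma factor_eq' {n d : ℕ} (hn : 1 ≤ n) (hdn : d ≤ n) {i : ℕ} (hi : i < d) (x : ℝ) :
    (x - (i:ℝ)/n) / (1 - (i:ℝ)/n) = 1 - (1-x) / (1 - (i:ℝ)/n) := by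
  have h := factor_eq hn hdn hi (1-x)
  rw [sub_sub_cancel] at h
  exact h

/-- Pointwise sandwich for one recursion step. -/
lemma step_bounds (n dn m : ℕ) (hn : 1 ≤ n) (hdn : dn ≤ n)
    (lam μ G : ℝ) (hlam0 : 0 ≤ lam) (hlam1 : lam ≤ 1) (hμ0 : 0 ≤ μ)
    (hμ1 : μ ≤ 1) (hδs : 1 - μ ≤ 1/4) (hrs : ((dn:ℝ)-1)/(n:ℝ) ≤ 1/2) :
    (dn:ℝ)^m * ((1-lam) + lam*((dn:ℝ)*(1-μ) - (dn:ℝ)^2*(1-μ)^2/2)) - G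
      ≤ (dn:ℝ)^m * (1 - lam * betaFn n dn μ) - G
    ∧ (dn:ℝ)^m * (1 - lam * betaFn n dn μ) - G
      ≤ (dn:ℝ)^m * ((1-lam) + lam*((dn:ℝ)*((1-μ)/(1-((dn:ℝ)-1)/(n:ℝ))))) - G := by
  have hδ0 : 0 ≤ 1 - μ := by linarith
  have hrpos : 0 < 1 - ((dn:ℝ)-1)/(n:ℝ) := rmargin_pos hn hdn
  have hratio : (1-μ)/(1-((dn:ℝ)-1)/(n:ℝ)) ≤ 1 := by
    rw [div_le_one hrpos]; linarith
  have hratio0 : 0 ≤ (1-μ)/(1-((dn:ℝ)-1)/(n:ℝ)) := div_nonneg hδ0 hrpos.le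
  have hβub : betaFn n dn μ ≤ μ^dn := by
    have h := betaFn_le hn hdn hδ0 (by linarith : 1 - μ ≤ 1)
    rw [sub_sub_cancel] at h
    exact h
  have hβlb : (1 - (1-μ)/(1-((dn:ℝ)-1)/(n:ℝ)))^dn ≤ betaFn n dn μ := by
    have h := le_betaFn hn hdn hδ0 hratio
    rw [sub_sub_cancel] at h
    exact h
  have hquad : μ^dn ≤ 1 - (dn:ℝ)*(1-μ) + (dn:ℝ)^2*(1-μ)^2/2 := by
    have h := pow_le_quad dn (1-μ) hδ0 (by linarith)
    rw [sub_sub_cancel] at h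
    exact h
  have hbern : 1 - (dn:ℝ)*((1-μ)/(1-((dn:ℝ)-1)/(n:ℝ)))
      ≤ (1 - (1-μ)/(1-((dn:ℝ)-1)/(n:ℝ)))^dn := by
    have h := one_add_mul_le_pow
      (a := -((1-μ)/(1-((dn:ℝ)-1)/(n:ℝ)))) (by linarith) dn
    simpa [mul_neg, ← sub_eq_add_neg] using h
  constructor
  · have hinner : (1-lam) + lam*((dn:ℝ)*(1-μ) - (dn:ℝ)^2*(1-μ)^2/2)
        ≤ 1 - lam * betaFn n dn μ := by
      nlinarith [mul_le_mul_of_nonneg_left (hβub.trans hquad) hlam0]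
    gcongr
  · have hinner : 1 - lam * betaFn n dn μ
        ≤ (1-lam) + lam*((dn:ℝ)*((1-μ)/(1-((dn:ℝ)-1)/(n:ℝ)))) := by
      nlinarith [mul_le_mul_of_nonneg_left (hbern.trans hβlb) hlam0]
    gcongr

/-- Pointwise sandwich for the derivative. -/
lemma deriv_bounds (n dn : ℕ) (hn : 1 ≤ n) (hd1 : 1 ≤ dn) (hdn : dn ≤ n)
    (μ : ℝ) (hμ1 : μ ≤ 1) (hμr : ((dn:ℝ)-1)/(n:ℝ) < μ)
    (hratio : (1-μ)/(1-((dn:ℝ)-1)/(n:ℝ)) ≤ 1) :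
    (dn:ℝ) * (1 - (1-μ)/(1-((dn:ℝ)-1)/(n:ℝ)))^(dn-1) ≤ betaDeriv n dn μ
    ∧ betaDeriv n dn μ ≤ (dn:ℝ) * ((1-((dn:ℝ)-1)/(n:ℝ))⁻¹ * μ^(dn-1)) := by
  have hδ0 : 0 ≤ 1 - μ := by linarith
  have hrpos : 0 < 1 - ((dn:ℝ)-1)/(n:ℝ) := rmargin_pos hn hdn
  have hratio0 : 0 ≤ (1-μ)/(1-((dn:ℝ)-1)/(n:ℝ)) := div_nonneg hδ0 hrpos.le
  rw [betaDeriv, if_pos hμr]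
  have hterm : ∀ j ∈ Finset.range dn,
      (1 - (1-μ)/(1-((dn:ℝ)-1)/(n:ℝ)))^(dn-1)
        ≤ (1 - (j:ℝ)/(n:ℝ))⁻¹ *
          ∏ i ∈ (Finset.range dn).erase j, (μ - (i:ℝ)/n) / (1 - (i:ℝ)/n)
      ∧ (1 - (j:ℝ)/(n:ℝ))⁻¹ *
          ∏ i ∈ (Finset.range dn).erase j, (μ - (i:ℝ)/n) / (1 - (i:ℝ)/n)
        ≤ (1-((dn:ℝ)-1)/(n:ℝ))⁻¹ * μ^(dn-1) := by
    intro j hj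
    rw [Finset.mem_range] at hj
    have hjp := denom_pos hn hdn hj
    have hjge := denom_ge hn hdn hj
    have hcard : ((Finset.range dn).erase j).card = dn - 1 := by
      rw [Finset.card_erase_of_mem (Finset.mem_range.2 hj), Finset.card_range]
    have hfac : ∀ i ∈ (Finset.range dn).erase j,
        (μ - (i:ℝ)/n) / (1 - (i:ℝ)/n) = 1 - (1-μ)/(1 - (i:ℝ)/n) := by
      intro i hi
      have hi' := Finset.mem_range.1 (Finset.mem_of_mem_erase hi)
      exact factor_eq' hn hdn hi' μ
    have hfub : ∀ i ∈ (Finset.range dn).erase j,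
        (μ - (i:ℝ)/n) / (1 - (i:ℝ)/n) ≤ μ := by
      intro i hi
      have hi' := Finset.mem_range.1 (Finset.mem_of_mem_erase hi)
      have hip := denom_pos hn hdn hi'
      rw [hfac i hi]
      have : 1 - μ ≤ (1-μ)/(1 - (i:ℝ)/n) := by
        rw [le_div_iff₀ hip]
        nlinarith [div_nonneg (Nat.cast_nonneg i) (Nat.cast_nonneg n : (0:ℝ) ≤ n)]
      linarith
    have hflb : ∀ i ∈ (Finset.range dn).erase j,
        1 - (1-μ)/(1-((dn:ℝ)-1)/(n:ℝ)) ≤ (μ - (i:ℝ)/n) / (1 - (i:ℝ)/n) := by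
      intro i hi
      have hi' := Finset.mem_range.1 (Finset.mem_of_mem_erase hi)
      have hip := denom_pos hn hdn hi'
      have hige := denom_ge hn hdn hi'
      rw [hfac i hi]
      have : (1-μ)/(1 - (i:ℝ)/n) ≤ (1-μ)/(1-((dn:ℝ)-1)/(n:ℝ)) := by gcongr
      linarith
    have hfnn : ∀ i ∈ (Finset.range dn).erase j,
        0 ≤ (μ - (i:ℝ)/n) / (1 - (i:ℝ)/n) := fun i hi =>
      le_trans (by linarith [hratio0, hratio] :
        (0:ℝ) ≤ 1 - (1-μ)/(1-((dn:ℝ)-1)/(n:ℝ))) (hflb i hi)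
    have hprodub : ∏ i ∈ (Finset.range dn).erase j, (μ - (i:ℝ)/n) / (1 - (i:ℝ)/n)
        ≤ μ^(dn-1) := by
      rw [← hcard]
      exact prod_le_const_pow hfnn hfub
    have hprodlb : (1 - (1-μ)/(1-((dn:ℝ)-1)/(n:ℝ)))^(dn-1)
        ≤ ∏ i ∈ (Finset.range dn).erase j, (μ - (i:ℝ)/n) / (1 - (i:ℝ)/n) := by
      rw [← hcard]
      exact const_pow_le_prod (by linarith) hflb
    have hprodnn : 0 ≤ ∏ i ∈ (Finset.range dn).erase j, (μ - (i:ℝ)/n) / (1 - (i:ℝ)/n) :=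
      Finset.prod_nonneg hfnn
    have hinv1 : (1:ℝ) ≤ (1 - (j:ℝ)/(n:ℝ))⁻¹ := by
      refine (one_le_inv₀ hjp).2 ?_
      linarith [div_nonneg (Nat.cast_nonneg j) (Nat.cast_nonneg n : (0:ℝ) ≤ n)]
    have hinv2 : (1 - (j:ℝ)/(n:ℝ))⁻¹ ≤ (1-((dn:ℝ)-1)/(n:ℝ))⁻¹ := by
      apply inv_anti₀ hrpos hjge
    constructor
    · calc (1 - (1-μ)/(1-((dn:ℝ)-1)/(n:ℝ)))^(dn-1)
          = 1 * (1 - (1-μ)/(1-((dn:ℝ)-1)/(n:ℝ)))^(dn-1) := (one_mul _).symm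
      _ ≤ (1 - (j:ℝ)/(n:ℝ))⁻¹ *
            ∏ i ∈ (Finset.range dn).erase j, (μ - (i:ℝ)/n) / (1 - (i:ℝ)/n) :=
        mul_le_mul hinv1 hprodlb (pow_nonneg (by linarith) _) (inv_nonneg.2 hjp.le)
    · exact mul_le_mul hinv2 hprodub hprodnn (inv_nonneg.2 hrpos.le)
  constructor
  · calc (dn:ℝ) * (1 - (1-μ)/(1-((dn:ℝ)-1)/(n:ℝ)))^(dn-1)
        = ∑ _j ∈ Finset.range dn, (1 - (1-μ)/(1-((dn:ℝ)-1)/(n:ℝ)))^(dn-1) := by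
          rw [Finset.sum_const, Finset.card_range, nsmul_eq_mul]
    _ ≤ _ := Finset.sum_le_sum (fun j hj => (hterm j hj).1)
  · calc (∑ j ∈ Finset.range dn, (1 - (j:ℝ)/(n:ℝ))⁻¹ *
        ∏ i ∈ (Finset.range dn).erase j, (μ - (i:ℝ)/n) / (1 - (i:ℝ)/n))
        ≤ ∑ _j ∈ Finset.range dn, (1-((dn:ℝ)-1)/(n:ℝ))⁻¹ * μ^(dn-1) :=
          Finset.sum_le_sum (fun j hj => (hterm j hj).2)
    _ = (dn:ℝ) * ((1-((dn:ℝ)-1)/(n:ℝ))⁻¹ * μ^(dn-1)) := by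
          rw [Finset.sum_const, Finset.card_range, nsmul_eq_mul]


set_option maxHeartbeats 1000000 in
/-- Corollary 5.5: if `d_n → ∞`, `d_n^{k+1}/n → 0`, and
`1 − λ_n = (ξ_n + log d_n)/d_n^k` with `ξ_n²/d_n → 0` and either
`ξ_n → −log α` with `α ∈ (0,∞)`, or `ξ_n → +∞` and `α = 0`, then
`μ_{n,k} → 1` and `β'_n(μ_{n,k}) → α`. -/
theorem stmt8 (d : ℕ → ℕ) (hd : ∀ n : ℕ, 1 ≤ n → 1 ≤ d n ∧ d n ≤ n)
    (hdtop : Tendsto d atTop atTop)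
    (k : ℕ) (hk : 1 ≤ k)
    (hdk : Tendsto (fun n => (d n : ℝ) ^ (k + 1) / (n : ℝ)) atTop (𝓝 0))
    (lam : ℕ → ℝ) (hlam : ∀ n, lam n ∈ Set.Ioo (0 : ℝ) 1)
    (ξ : ℕ → ℝ)
    (hform : ∀ n, 1 - lam n = (ξ n + Real.log (d n)) / (d n : ℝ) ^ k)
    (hξ : Tendsto (fun n => (ξ n) ^ 2 / (d n : ℝ)) atTop (𝓝 0))
    (α : ℝ)
    (hcase : (0 < α ∧ Tendsto ξ atTop (𝓝 (-Real.log α))) ∨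
      (α = 0 ∧ Tendsto ξ atTop atTop)) :
    Tendsto (fun n => muSeq n (d n) (lam n) (k - 1)) atTop (𝓝 1) ∧
    Tendsto (fun n => betaDeriv n (d n) (muSeq n (d n) (lam n) (k - 1))) atTop (𝓝 α) := by
  classical
  have hDt : Tendsto (fun n => (d n : ℝ)) atTop atTop :=
    tendsto_natCast_atTop_atTop.comp hdtop
  have hD1 : ∀ᶠ n in atTop, (1:ℝ) ≤ (d n : ℝ) := hDt.eventually_ge_atTop 1
  have hbase : ∀ᶠ n in atTop, 1 ≤ n ∧ 1 ≤ d n ∧ d n ≤ n := by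
    filter_upwards [eventually_ge_atTop 1] with n hn
    exact ⟨hn, (hd n hn).1, (hd n hn).2⟩
  obtain ⟨G, hGn⟩ : ∃ G : ℕ → ℝ, ∀ n, G n = ξ n + Real.log (d n) :=
    ⟨_, fun _ => rfl⟩
  have habsG : ∀ n, |G n| ≤ ((G n)^2 + 1)/2 := by
    intro n
    rcases abs_cases (G n) with ⟨h, _⟩ | ⟨h, _⟩ <;> rw [h] <;>
      nlinarith [sq_nonneg (G n - 1), sq_nonneg (G n + 1)]
  -- generic: F → 0  ⇒  F / D^m → 0
  have hdivlim : ∀ (F : ℕ → ℝ), Tendsto F atTop (𝓝 0) → ∀ m : ℕ,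
      Tendsto (fun n => F n / (d n : ℝ) ^ m) atTop (𝓝 0) := by
    intro F hF m
    apply squeeze_zero_norm' ?_ (by simpa using hF.abs)
    filter_upwards [hD1] with n h1
    have hDm : (1:ℝ) ≤ (d n : ℝ) ^ m := one_le_pow₀ h1
    rw [Real.norm_eq_abs, abs_div, abs_of_pos (by linarith : (0:ℝ) < (d n:ℝ)^m)]
    exact div_le_self (abs_nonneg _) hDm
  have hlogsq : Tendsto (fun n => (Real.log (d n))^2 / (d n : ℝ)) atTop (𝓝 0) := by
    have h := (Real.tendsto_pow_log_div_mul_add_atTop 1 0 2 one_ne_zero).comp hDt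
    simpa [Function.comp_def] using h
  have hGsqD : Tendsto (fun n => (G n)^2 / (d n : ℝ)) atTop (𝓝 0) := by
    have hlim : Tendsto (fun n =>
        2*((ξ n)^2/(d n:ℝ)) + 2*((Real.log (d n))^2/(d n:ℝ))) atTop (𝓝 0) := by
      have := (hξ.const_mul 2).add (hlogsq.const_mul 2); simpa using this
    apply squeeze_zero' ?_ ?_ hlim
    · filter_upwards [hD1] with n h1
      have : (0:ℝ) < (d n:ℝ) := by linarith
      positivity
    · filter_upwards [hD1] with n h1
      have hDp : (0:ℝ) < (d n:ℝ) := by linarith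
      have hs : (G n)^2 ≤ 2*(ξ n)^2 + 2*(Real.log (d n))^2 := by
        rw [hGn n]; nlinarith [sq_nonneg (ξ n - Real.log (d n))]
      calc (G n)^2/(d n:ℝ) ≤ (2*(ξ n)^2 + 2*(Real.log (d n))^2)/(d n:ℝ) :=
            (div_le_div_iff_of_pos_right hDp).2 hs
      _ = 2*((ξ n)^2/(d n:ℝ)) + 2*((Real.log (d n))^2/(d n:ℝ)) := by ring
  have hsq_pow : ∀ m : ℕ, 1 ≤ m →
      Tendsto (fun n => (G n)^2/(d n:ℝ)^m) atTop (𝓝 0) := by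
    intro m hm
    apply squeeze_zero' ?_ ?_ hGsqD
    · filter_upwards [hD1] with n h1
      have : (0:ℝ) < (d n:ℝ) := by linarith
      positivity
    · filter_upwards [hD1] with n h1
      have h2 : (d n:ℝ) ≤ (d n:ℝ)^m := le_self_pow₀ (by linarith) (by omega)
      exact div_le_div_of_nonneg_left (sq_nonneg _) (by linarith) h2
  have hG_pow : ∀ m : ℕ, 1 ≤ m →
      Tendsto (fun n => G n/(d n:ℝ)^m) atTop (𝓝 0) := by
    intro m hm
    have hDm : Tendsto (fun n => (d n:ℝ)^m) atTop atTop :=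
      (tendsto_pow_atTop (by omega : m ≠ 0)).comp hDt
    have hinv : Tendsto (fun n => ((d n:ℝ)^m)⁻¹) atTop (𝓝 0) := hDm.inv_tendsto_atTop
    apply squeeze_zero_norm' ?_ (by simpa using ((hsq_pow m hm).add hinv).div_const 2)
    filter_upwards [hD1] with n h1
    have hpos : (0:ℝ) < (d n:ℝ)^m := by
      have : (0:ℝ) < (d n:ℝ) := by linarith
      positivity
    rw [Real.norm_eq_abs, abs_div, abs_of_pos hpos]
    calc |G n|/(d n:ℝ)^m ≤ (((G n)^2 + 1)/2)/(d n:ℝ)^m := by gcongr; exact habsG n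
    _ = ((G n)^2/(d n:ℝ)^m + ((d n:ℝ)^m)⁻¹)/2 := by ring
  have hDn_lim : Tendsto (fun n => (d n:ℝ)/(n:ℝ)) atTop (𝓝 0) := by
    apply squeeze_zero' ?_ ?_ hdk
    · filter_upwards [hbase] with n ⟨hn1, hd1, hdn⟩
      have hnp : (0:ℝ) < (n:ℝ) := by exact_mod_cast hn1
      exact div_nonneg (Nat.cast_nonneg _) hnp.le
    · filter_upwards [hbase] with n ⟨hd1', hdn⟩
      have hnp : (0:ℝ) < (n:ℝ) := by exact_mod_cast hd1'
      have h1 : (1:ℝ) ≤ (d n:ℝ) := by exact_mod_cast hdn.1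
      have h2 : (d n:ℝ) ≤ (d n:ℝ)^(k+1) := le_self_pow₀ (by linarith) (by omega)
      exact (div_le_div_iff_of_pos_right hnp).2 h2
  have hrr0 : Tendsto (fun n => ((d n:ℝ)-1)/(n:ℝ)) atTop (𝓝 0) := by
    apply squeeze_zero' ?_ ?_ hDn_lim
    · filter_upwards [hbase] with n ⟨hn1, hd1, hdn⟩
      have hnp : (0:ℝ) < (n:ℝ) := by exact_mod_cast hn1
      have h1 : (1:ℝ) ≤ (d n:ℝ) := by exact_mod_cast hd1
      exact div_nonneg (by linarith) hnp.le
    · filter_upwards [hbase] with n ⟨hn1, hd1, hdn⟩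
      have hnp : (0:ℝ) < (n:ℝ) := by exact_mod_cast hn1
      exact (div_le_div_iff_of_pos_right hnp).2 (by linarith)
  have hrr1 : Tendsto (fun n => 1 - ((d n:ℝ)-1)/(n:ℝ)) atTop (𝓝 1) := by
    have := (tendsto_const_nhds (x := (1:ℝ)) (f := atTop)).sub hrr0
    simpa using this
  have hrrinv : Tendsto (fun n => (1 - ((d n:ℝ)-1)/(n:ℝ))⁻¹) atTop (𝓝 1) := by
    have := hrr1.inv₀ one_ne_zero
    simpa using this
  have hGrr : Tendsto (fun n => G n * (((d n:ℝ)-1)/(n:ℝ))) atTop (𝓝 0) := by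
    have hlim : Tendsto (fun n =>
        ((G n)^2/(d n:ℝ)) * ((d n:ℝ)^(k+1)/(n:ℝ))/2 + ((d n:ℝ)^(k+1)/(n:ℝ))/2)
        atTop (𝓝 0) := by
      have := ((hGsqD.mul hdk).div_const 2).add (hdk.div_const 2)
      simpa using this
    apply squeeze_zero_norm' ?_ hlim
    filter_upwards [hbase, hD1] with n ⟨hn1, hd1, hdn⟩ h1
    have hnp : (0:ℝ) < (n:ℝ) := by exact_mod_cast hn1
    have hDp : (0:ℝ) < (d n:ℝ) := by linarith
    have hrrnn : 0 ≤ ((d n:ℝ)-1)/(n:ℝ) := div_nonneg (by linarith) hnp.le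
    have hrrle : ((d n:ℝ)-1)/(n:ℝ) ≤ (d n:ℝ)/(n:ℝ) := (div_le_div_iff_of_pos_right hnp).2 (by linarith)
    have habs : |G n| ≤ ((G n)^2 + 1)/2 := habsG n
    have hd2 : (d n:ℝ)^2 ≤ (d n:ℝ)^(k+1) := pow_le_pow_right₀ h1 (by omega)
    have hdd : (d n:ℝ) ≤ (d n:ℝ)^(k+1) := le_self_pow₀ (by linarith) (by omega)
    rw [Real.norm_eq_abs, abs_mul, abs_of_nonneg hrrnn]
    calc |G n| * (((d n:ℝ)-1)/(n:ℝ)) ≤ (((G n)^2 + 1)/2) * ((d n:ℝ)/(n:ℝ)) := by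
          apply mul_le_mul habs hrrle hrrnn (by positivity)
    _ = ((G n)^2/(d n:ℝ)) * ((d n:ℝ)^2/(n:ℝ))/2 + ((d n:ℝ)/(n:ℝ))/2 := by
          field_simp
    _ ≤ ((G n)^2/(d n:ℝ)) * ((d n:ℝ)^(k+1)/(n:ℝ))/2 + ((d n:ℝ)^(k+1)/(n:ℝ))/2 := by
          gcongr ((G n)^2/(d n:ℝ)) * (?_/(n:ℝ))/2 + (?_/(n:ℝ))/2 <;>
            first | positivity | exact hd2 | exact hdd
  have hε : Tendsto (fun n => 1 - lam n) atTop (𝓝 0) := by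
    apply (hG_pow k hk).congr
    intro n
    rw [hGn n]
    exact (hform n).symm
  have hεG : Tendsto (fun n => (1 - lam n) * G n) atTop (𝓝 0) := by
    apply (hsq_pow k hk).congr
    intro n
    rw [hGn n, hform n]; ring
  have hlam1 : Tendsto lam atTop (𝓝 1) := by
    have := (tendsto_const_nhds (x := (1:ℝ)) (f := atTop)).sub hε
    simpa using this
  -- main induction
  have key : ∀ j, j + 1 ≤ k →
      Tendsto (fun n => (d n:ℝ)^(k-j) * (1 - muSeq n (d n) (lam n) j) - G n)
        atTop (𝓝 0) := by
    intro j
    induction j with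
    | zero =>
      intro _
      apply Tendsto.congr' ?_ (tendsto_const_nhds (x := (0:ℝ)))
      filter_upwards [hbase] with n ⟨hn1, hd1n, hdnn⟩
      have h1 : (1:ℝ) ≤ (d n:ℝ) := by exact_mod_cast hd1n
      have hDk : (0:ℝ) < (d n:ℝ)^k := by positivity
      have h := hform n
      rw [eq_div_iff (ne_of_gt hDk)] at h
      show (0:ℝ) = (d n:ℝ)^(k-0) * (1 - muSeq n (d n) (lam n) 0) - G n
      rw [hGn n]
      simp only [Nat.sub_zero, muSeq]
      linarith [h]
    | succ j ih =>
      intro hjk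
      have ihE := ih (by omega)
      obtain ⟨En, hEn'⟩ : ∃ En : ℕ → ℝ, ∀ n, En n
          = (d n:ℝ)^(k-j) * (1 - muSeq n (d n) (lam n) j) - G n := ⟨_, fun _ => rfl⟩
      replace ihE : Tendsto En atTop (𝓝 0) := ihE.congr (fun n => (hEn' n).symm)
      obtain ⟨m, hm1, hm2, hm3⟩ :
          ∃ m, k - (j+1) = m ∧ k - j = m + 1 ∧ 1 ≤ m := ⟨k - (j+1), rfl, by omega, by omega⟩
      have hEG : ∀ n, En n + G n = (d n:ℝ)^(m+1) * (1 - muSeq n (d n) (lam n) j) := by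
        intro n
        rw [hEn' n, ← hm2]; ring
      -- δ_j → 0
      have hδ0 : Tendsto (fun n => 1 - muSeq n (d n) (lam n) j) atTop (𝓝 0) := by
        have hlim : Tendsto (fun n => En n/(d n:ℝ)^(m+1) + G n/(d n:ℝ)^(m+1))
            atTop (𝓝 0) := by
          simpa using (hdivlim En ihE (m+1)).add (hG_pow (m+1) (by omega))
        apply Tendsto.congr' ?_ hlim
        filter_upwards [hD1] with n h1
        have hDp : (0:ℝ) < (d n:ℝ) := by linarith
        have hne : ((d n:ℝ)^(m+1)) ≠ 0 := by positivity
        rw [← add_div, hEG n, mul_comm, mul_div_assoc, div_self hne, mul_one]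
      -- (En + G)^2 / D^m → 0
      have hP2 : Tendsto (fun n => (En n + G n)^2/(d n:ℝ)^m) atTop (𝓝 0) := by
        have h1 := hdivlim (fun n => En n * En n) (by simpa using ihE.mul ihE) m
        have h2 := (ihE.mul (hG_pow m hm3)).const_mul 2
        have h3 := hsq_pow m hm3
        have hs := (h1.add h2).add h3
        apply Tendsto.congr ?_ (by simpa using hs)
        intro n
        ring
      -- D^m * (1 - lam) → 0
      have hDmε : Tendsto (fun n => (d n:ℝ)^m * (1 - lam n)) atTop (𝓝 0) := by
        apply Tendsto.congr' ?_ (hG_pow (j+1) (by omega))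
        filter_upwards [hD1] with n h1
        have hDp : (0:ℝ) < (d n:ℝ) := by linarith
        have hkm : k = m + (j+1) := by omega
        rw [hform n, hGn n, hkm, pow_add]
        field_simp
        ring
      -- the sandwich functions
      obtain ⟨up, hup'⟩ : ∃ up : ℕ → ℝ, ∀ n, up n = (d n:ℝ)^m * (1 - lam n)
        + (lam n * En n - (1 - lam n)*G n + G n * (((d n:ℝ)-1)/(n:ℝ)))
          /(1 - ((d n:ℝ)-1)/(n:ℝ)) := ⟨_, fun _ => rfl⟩
      obtain ⟨low, hlow'⟩ : ∃ low : ℕ → ℝ, ∀ n, low n = (d n:ℝ)^m * (1 - lam n)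
        + lam n * En n - (1 - lam n)*G n - lam n * ((En n + G n)^2/(d n:ℝ)^m)/2 :=
        ⟨_, fun _ => rfl⟩
      have hup0 : Tendsto up atTop (𝓝 0) := by
        have hnum : Tendsto (fun n =>
            lam n * En n - (1 - lam n)*G n + G n * (((d n:ℝ)-1)/(n:ℝ)))
            atTop (𝓝 0) := by
          have := ((hlam1.mul ihE).sub hεG).add hGrr
          simpa using this
        have h2 := hDmε.add (hnum.div hrr1 one_ne_zero)
        have h3 : Tendsto (fun n => (d n:ℝ)^m * (1 - lam n)
          + (lam n * En n - (1 - lam n)*G n + G n * (((d n:ℝ)-1)/(n:ℝ)))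
            /(1 - ((d n:ℝ)-1)/(n:ℝ))) atTop (𝓝 0) := by simpa using h2
        exact h3.congr (fun n => (hup' n).symm)
      have hlow0 : Tendsto low atTop (𝓝 0) := by
        have h := ((hDmε.add (hlam1.mul ihE)).sub hεG).sub ((hlam1.mul hP2).div_const 2)
        have h3 : Tendsto (fun n => (d n:ℝ)^m * (1 - lam n)
          + lam n * En n - (1 - lam n)*G n - lam n * ((En n + G n)^2/(d n:ℝ)^m)/2)
            atTop (𝓝 0) := by
          have heq : ∀ n, (d n:ℝ)^m * (1 - lam n)
              + lam n * En n - (1 - lam n)*G n - lam n * ((En n + G n)^2/(d n:ℝ)^m)/2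
              = (d n:ℝ)^m * (1 - lam n) + lam n * En n - (1 - lam n)*G n
                - lam n * ((En n + G n)^2/(d n:ℝ)^m)/2 := fun n => rfl
          simpa using h
        exact h3.congr (fun n => (hlow' n).symm)
      -- eventual sandwich
      have hsand : ∀ᶠ n in atTop,
          low n ≤ (d n:ℝ)^(k-(j+1)) * (1 - muSeq n (d n) (lam n) (j+1)) - G n
          ∧ (d n:ℝ)^(k-(j+1)) * (1 - muSeq n (d n) (lam n) (j+1)) - G n ≤ up n := by
        filter_upwards [hbase, hD1,
          hδ0.eventually (eventually_le_nhds (by norm_num : (0:ℝ) < 1/4)),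
          hrr0.eventually (eventually_le_nhds (by norm_num : (0:ℝ) < 1/2))]
          with n hb h1 hδs hrs
        obtain ⟨hn1, hd1, hdn⟩ := hb
        have hnp : (0:ℝ) < (n:ℝ) := by exact_mod_cast hn1
        have hDp : (0:ℝ) < (d n:ℝ) := by linarith
        have hmu := muSeq_mem hn1 hdn (hlam n) j
        have hμ1 : muSeq n (d n) (lam n) j ≤ 1 := le_trans hmu.2 (hlam n).2.le
        have hsb := step_bounds n (d n) m hn1 hdn (lam n)
          (muSeq n (d n) (lam n) j) (G n) (hlam n).1.le (hlam n).2.le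
          hmu.1 hμ1 hδs hrs
        have hrpos : 0 < 1 - ((d n:ℝ)-1)/(n:ℝ) := rmargin_pos hn1 hdn
        have hrne : (1 - ((d n:ℝ)-1)/(n:ℝ)) ≠ 0 := ne_of_gt hrpos
        have hxmne : ((d n:ℝ))^m ≠ 0 := by positivity
        have hEGn := hEG n
        have hmid : (d n:ℝ)^(k-(j+1)) * (1 - muSeq n (d n) (lam n) (j+1)) - G n
            = (d n:ℝ)^m * (1 - lam n * betaFn n (d n) (muSeq n (d n) (lam n) j)) - G n := by
          rw [hm1]; rfl
        constructor
        · rw [hmid]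
          refine le_trans (le_of_eq ?_) hsb.1
          rw [hlow' n]
          rw [hEGn]
          have hEneq : En n = (d n:ℝ)^(m+1) * (1 - muSeq n (d n) (lam n) j) - G n := by
            linarith [hEGn]
          rw [hEneq]
          field_simp
          ring
        · rw [hmid]
          refine le_trans hsb.2 (le_of_eq ?_)
          rw [hup' n]
          have hEneq : En n = (d n:ℝ)^(m+1) * (1 - muSeq n (d n) (lam n) j) - G n := by
            linarith [hEGn]
          have hX : lam n * En n - (1 - lam n)*G n + G n * (((d n:ℝ)-1)/(n:ℝ))
              = ((d n:ℝ)^m * (lam n * ((d n:ℝ) * (1 - muSeq n (d n) (lam n) j))))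
                - G n * (1 - ((d n:ℝ)-1)/(n:ℝ)) := by
            rw [hEneq, pow_succ]; ring
          rw [hX, sub_div ((d n:ℝ)^m * (lam n * ((d n:ℝ) * (1 - muSeq n (d n) (lam n) j))))
            (G n * (1 - ((d n:ℝ)-1)/(n:ℝ))) (1 - ((d n:ℝ)-1)/(n:ℝ)),
            mul_div_cancel_right₀ _ hrne]
          ring
      exact tendsto_of_tendsto_of_tendsto_of_le_of_le' hlow0 hup0
        (hsand.mono fun n h => h.1) (hsand.mono fun n h => h.2)
  -- conclude part 1
  have hEk0 := key (k-1) (by omega)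
  have hk1 : k - (k-1) = 1 := by omega
  rw [hk1] at hEk0
  simp only [pow_one] at hEk0
  obtain ⟨Ek, hEk'⟩ : ∃ Ek : ℕ → ℝ, ∀ n, Ek n
      = (d n:ℝ) * (1 - muSeq n (d n) (lam n) (k-1)) - G n := ⟨_, fun _ => rfl⟩
  have hEk : Tendsto Ek atTop (𝓝 0) := hEk0.congr (fun n => (hEk' n).symm)
  have hEkG : ∀ n, Ek n + G n = (d n:ℝ) * (1 - muSeq n (d n) (lam n) (k-1)) := by
    intro n; rw [hEk' n]; ring
  have hδk0 : Tendsto (fun n => 1 - muSeq n (d n) (lam n) (k-1)) atTop (𝓝 0) := by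
    have hlim : Tendsto (fun n => Ek n/(d n:ℝ)^1 + G n/(d n:ℝ)^1) atTop (𝓝 0) := by
      simpa using (hdivlim Ek hEk 1).add (hG_pow 1 le_rfl)
    apply Tendsto.congr' ?_ hlim
    filter_upwards [hD1] with n h1
    have hDp : (0:ℝ) < (d n:ℝ) := by linarith
    rw [pow_one, ← add_div, hEkG n, mul_comm, mul_div_assoc,
      div_self (ne_of_gt hDp), mul_one]
  have part1 : Tendsto (fun n => muSeq n (d n) (lam n) (k - 1)) atTop (𝓝 1) := by
    have := (tendsto_const_nhds (x := (1:ℝ)) (f := atTop)).sub hδk0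
    simpa using this
  refine ⟨part1, ?_⟩
  -- part 2
  have hDδsq : Tendsto (fun n => (Ek n + G n)^2/(d n:ℝ)) atTop (𝓝 0) := by
    have h1 := hdivlim (fun n => Ek n * Ek n) (by simpa using hEk.mul hEk) 1
    have h2 := (hEk.mul (hG_pow 1 le_rfl)).const_mul 2
    have h3 := hsq_pow 1 le_rfl
    have hs := (h1.add h2).add h3
    apply Tendsto.congr ?_ (by simpa using hs)
    intro n
    ring
  have hexp : ∀ c : ℕ → ℝ, Tendsto c atTop (𝓝 0) →
      Tendsto (fun n => Real.exp (c n - ξ n)) atTop (𝓝 α) := by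
    intro c hc
    rcases hcase with ⟨hα, hξa⟩ | ⟨hα0, hξb⟩
    · have h1 : Tendsto (fun n => c n - ξ n) atTop (𝓝 (Real.log α)) := by
        have := hc.sub hξa
        simpa using this
      have h2 := (Real.continuous_exp.tendsto (Real.log α)).comp h1
      rw [Real.exp_log hα] at h2
      exact h2
    · subst hα0
      have hneg : Tendsto (fun n => -ξ n) atTop atBot := tendsto_neg_atTop_atBot.comp hξb
      have hg : Tendsto (fun n => 1 + -ξ n) atTop atBot :=
        tendsto_atBot_add_const_left atTop 1 hneg
      have h1 : Tendsto (fun n => c n - ξ n) atTop atBot := by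
        apply tendsto_atBot_mono' atTop ?_ hg
        filter_upwards [hc.eventually (eventually_le_nhds one_pos)] with n h
        show c n - ξ n ≤ 1 + -ξ n
        linarith
      exact Real.tendsto_exp_atBot.comp h1
  obtain ⟨cU, hcU'⟩ : ∃ cU : ℕ → ℝ, ∀ n, cU n
      = G n + ((d n - 1 : ℕ):ℝ) * Real.log (muSeq n (d n) (lam n) (k-1)) :=
    ⟨_, fun _ => rfl⟩
  obtain ⟨cL, hcL'⟩ : ∃ cL : ℕ → ℝ, ∀ n, cL n
      = G n + ((d n - 1 : ℕ):ℝ) * Real.log (1 - (1 - muSeq n (d n) (lam n) (k-1))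
          /(1 - ((d n:ℝ)-1)/(n:ℝ))) := ⟨_, fun _ => rfl⟩
  have hcU : Tendsto cU atTop (𝓝 0) := by
    have hlowB : Tendsto (fun n => -(Ek n) - 2*((Ek n + G n)^2/(d n:ℝ)))
        atTop (𝓝 0) := by
      have := hEk.neg.sub (hDδsq.const_mul 2); simpa using this
    have hupB : Tendsto (fun n => -(Ek n) + (1 - muSeq n (d n) (lam n) (k-1)))
        atTop (𝓝 0) := by
      have := hEk.neg.add hδk0; simpa using this
    have hbnd : ∀ᶠ n in atTop,
        -(Ek n) - 2*((Ek n + G n)^2/(d n:ℝ)) ≤ cU n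
        ∧ cU n ≤ -(Ek n) + (1 - muSeq n (d n) (lam n) (k-1)) := by
      filter_upwards [hbase, hD1,
        hδk0.eventually (eventually_le_nhds (by norm_num : (0:ℝ) < 1/4))]
        with n hb h1 hδs
      obtain ⟨hn1, hd1, hdn⟩ := hb
      have hDp : (0:ℝ) < (d n:ℝ) := by linarith
      have hmu := muSeq_mem hn1 hdn (hlam n) (k-1)
      have hμ1 : muSeq n (d n) (lam n) (k-1) ≤ 1 := le_trans hmu.2 (hlam n).2.le
      have hδnn : 0 ≤ 1 - muSeq n (d n) (lam n) (k-1) := by linarith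
      have hlog := neg_log_bound hδnn (by linarith)
      rw [sub_sub_cancel] at hlog
      have hcast : ((d n - 1 : ℕ):ℝ) = (d n:ℝ) - 1 := by
        rw [Nat.cast_sub hd1]; norm_num
      have hEkn := hEk' n
      have hq : (Ek n + G n)^2/(d n:ℝ)
          = (d n:ℝ)*(1 - muSeq n (d n) (lam n) (k-1))^2 := by
        rw [hEkG n]
        field_simp
      have hcoef0 : (0:ℝ) ≤ (d n:ℝ) - 1 := by linarith
      constructor
      · have hB : ((d n:ℝ)-1)*(-(1 - muSeq n (d n) (lam n) (k-1))
            - 2*(1 - muSeq n (d n) (lam n) (k-1))^2)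
            ≤ ((d n:ℝ)-1)*Real.log (muSeq n (d n) (lam n) (k-1)) :=
          mul_le_mul_of_nonneg_left hlog.1 hcoef0
        have hA : (d n:ℝ)*(-(1 - muSeq n (d n) (lam n) (k-1))
            - 2*(1 - muSeq n (d n) (lam n) (k-1))^2)
            ≤ ((d n:ℝ)-1)*(-(1 - muSeq n (d n) (lam n) (k-1))
            - 2*(1 - muSeq n (d n) (lam n) (k-1))^2) := by
          apply mul_le_mul_of_nonpos_right (by linarith)
          nlinarith [sq_nonneg (1 - muSeq n (d n) (lam n) (k-1))]
        rw [hcU' n]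
        rw [hcast]
        nlinarith [hA, hB, hq, hEkn]
      · have hB : ((d n:ℝ)-1)*Real.log (muSeq n (d n) (lam n) (k-1))
            ≤ ((d n:ℝ)-1)*(-(1 - muSeq n (d n) (lam n) (k-1))) :=
          mul_le_mul_of_nonneg_left hlog.2 hcoef0
        rw [hcU' n, hcast]
        nlinarith [hB, hEkn]
    exact tendsto_of_tendsto_of_tendsto_of_le_of_le' hlowB hupB
      (hbnd.mono fun n h => h.1) (hbnd.mono fun n h => h.2)
  have hcL : Tendsto cL atTop (𝓝 0) := by
    have hhead : Tendsto (fun n =>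
        (-(G n * (((d n:ℝ)-1)/(n:ℝ))) - Ek n)/(1 - ((d n:ℝ)-1)/(n:ℝ)))
        atTop (𝓝 0) := by
      have := (hGrr.neg.sub hEk).div hrr1 one_ne_zero
      rw [show ((-0 - 0 : ℝ))/1 = 0 by norm_num] at this; exact this
    have hBsq : Tendsto (fun n =>
        ((Ek n + G n)^2/(d n:ℝ)) * ((1 - ((d n:ℝ)-1)/(n:ℝ))⁻¹)^2) atTop (𝓝 0) := by
      have := hDδsq.mul (hrrinv.pow 2)
      simpa using this
    have hw0 : Tendsto (fun n =>
        (1 - muSeq n (d n) (lam n) (k-1))/(1 - ((d n:ℝ)-1)/(n:ℝ))) atTop (𝓝 0) := by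
      have := hδk0.div hrr1 one_ne_zero
      rw [show ((0 : ℝ))/1 = 0 by norm_num] at this; exact this
    have hlowB : Tendsto (fun n =>
        (-(G n * (((d n:ℝ)-1)/(n:ℝ))) - Ek n)/(1 - ((d n:ℝ)-1)/(n:ℝ))
        - 2*(((Ek n + G n)^2/(d n:ℝ)) * ((1 - ((d n:ℝ)-1)/(n:ℝ))⁻¹)^2))
        atTop (𝓝 0) := by
      have := hhead.sub (hBsq.const_mul 2); simpa using this
    have hupB : Tendsto (fun n =>
        (-(G n * (((d n:ℝ)-1)/(n:ℝ))) - Ek n)/(1 - ((d n:ℝ)-1)/(n:ℝ))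
        + (1 - muSeq n (d n) (lam n) (k-1))/(1 - ((d n:ℝ)-1)/(n:ℝ)))
        atTop (𝓝 0) := by
      have := hhead.add hw0; simpa using this
    have hbnd : ∀ᶠ n in atTop,
        (-(G n * (((d n:ℝ)-1)/(n:ℝ))) - Ek n)/(1 - ((d n:ℝ)-1)/(n:ℝ))
          - 2*(((Ek n + G n)^2/(d n:ℝ)) * ((1 - ((d n:ℝ)-1)/(n:ℝ))⁻¹)^2) ≤ cL n
        ∧ cL n ≤ (-(G n * (((d n:ℝ)-1)/(n:ℝ))) - Ek n)/(1 - ((d n:ℝ)-1)/(n:ℝ))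
          + (1 - muSeq n (d n) (lam n) (k-1))/(1 - ((d n:ℝ)-1)/(n:ℝ)) := by
      filter_upwards [hbase, hD1,
        hδk0.eventually (eventually_le_nhds (by norm_num : (0:ℝ) < 1/4)),
        hrr0.eventually (eventually_le_nhds (by norm_num : (0:ℝ) < 1/2))]
        with n hb h1 hδs hrs
      obtain ⟨hn1, hd1, hdn⟩ := hb
      have hnp : (0:ℝ) < (n:ℝ) := by exact_mod_cast hn1
      have hDp : (0:ℝ) < (d n:ℝ) := by linarith
      have hrpos : 0 < 1 - ((d n:ℝ)-1)/(n:ℝ) := rmargin_pos hn1 hdn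
      have hrne : (1 - ((d n:ℝ)-1)/(n:ℝ)) ≠ 0 := ne_of_gt hrpos
      have hmu := muSeq_mem hn1 hdn (hlam n) (k-1)
      have hμ1 : muSeq n (d n) (lam n) (k-1) ≤ 1 := le_trans hmu.2 (hlam n).2.le
      have hδnn : 0 ≤ 1 - muSeq n (d n) (lam n) (k-1) := by linarith
      have hwnn : 0 ≤ (1 - muSeq n (d n) (lam n) (k-1))/(1 - ((d n:ℝ)-1)/(n:ℝ)) :=
        div_nonneg hδnn hrpos.le
      have hrhalf : (1:ℝ)/2 ≤ 1 - ((d n:ℝ)-1)/(n:ℝ) := by linarith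
      have hwhalf : (1 - muSeq n (d n) (lam n) (k-1))/(1 - ((d n:ℝ)-1)/(n:ℝ)) ≤ 1/2 := by
        rw [div_le_iff₀ hrpos]
        nlinarith
      have hlog := neg_log_bound hwnn hwhalf
      have hcast : ((d n - 1 : ℕ):ℝ) = (d n:ℝ) - 1 := by
        rw [Nat.cast_sub hd1]; norm_num
      have hcoef0 : (0:ℝ) ≤ (d n:ℝ) - 1 := by linarith
      have hDw : (d n:ℝ) * ((1 - muSeq n (d n) (lam n) (k-1))/(1 - ((d n:ℝ)-1)/(n:ℝ)))
          = (Ek n + G n)/(1 - ((d n:ℝ)-1)/(n:ℝ)) := by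
        rw [hEkG n]; ring
      have hGrw : G n - (Ek n + G n)/(1 - ((d n:ℝ)-1)/(n:ℝ))
          = (-(G n * (((d n:ℝ)-1)/(n:ℝ))) - Ek n)/(1 - ((d n:ℝ)-1)/(n:ℝ)) := by
        rw [eq_div_iff hrne, sub_mul, div_mul_cancel₀ _ hrne]; ring
      have hq2 : (Ek n + G n)^2/(d n:ℝ)
          = (d n:ℝ)*(1 - muSeq n (d n) (lam n) (k-1))^2 := by
        rw [hEkG n]
        field_simp
      have hDww : (d n:ℝ) * ((1 - muSeq n (d n) (lam n) (k-1))
            /(1 - ((d n:ℝ)-1)/(n:ℝ)))^2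
          = ((Ek n + G n)^2/(d n:ℝ)) * ((1 - ((d n:ℝ)-1)/(n:ℝ))⁻¹)^2 := by
        rw [hq2]
        ring
      constructor
      · have hB : ((d n:ℝ)-1)*(-((1 - muSeq n (d n) (lam n) (k-1))
              /(1 - ((d n:ℝ)-1)/(n:ℝ)))
            - 2*((1 - muSeq n (d n) (lam n) (k-1))/(1 - ((d n:ℝ)-1)/(n:ℝ)))^2)
            ≤ ((d n:ℝ)-1)*Real.log (1 - (1 - muSeq n (d n) (lam n) (k-1))
              /(1 - ((d n:ℝ)-1)/(n:ℝ))) :=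
          mul_le_mul_of_nonneg_left hlog.1 hcoef0
        have hA : (d n:ℝ)*(-((1 - muSeq n (d n) (lam n) (k-1))
              /(1 - ((d n:ℝ)-1)/(n:ℝ)))
            - 2*((1 - muSeq n (d n) (lam n) (k-1))/(1 - ((d n:ℝ)-1)/(n:ℝ)))^2)
            ≤ ((d n:ℝ)-1)*(-((1 - muSeq n (d n) (lam n) (k-1))
              /(1 - ((d n:ℝ)-1)/(n:ℝ)))
            - 2*((1 - muSeq n (d n) (lam n) (k-1))/(1 - ((d n:ℝ)-1)/(n:ℝ)))^2) := by
          apply mul_le_mul_of_nonpos_right (by linarith)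
          nlinarith [sq_nonneg ((1 - muSeq n (d n) (lam n) (k-1))
            /(1 - ((d n:ℝ)-1)/(n:ℝ)))]
        rw [hcL' n, hcast]
        nlinarith [hA, hB, hDw, hGrw, hDww]
      · have hB : ((d n:ℝ)-1)*Real.log (1 - (1 - muSeq n (d n) (lam n) (k-1))
              /(1 - ((d n:ℝ)-1)/(n:ℝ)))
            ≤ ((d n:ℝ)-1)*(-((1 - muSeq n (d n) (lam n) (k-1))
              /(1 - ((d n:ℝ)-1)/(n:ℝ)))) :=
          mul_le_mul_of_nonneg_left hlog.2 hcoef0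
        rw [hcL' n, hcast]
        nlinarith [hB, hDw, hGrw, hwnn]
    exact tendsto_of_tendsto_of_tendsto_of_le_of_le' hlowB hupB
      (hbnd.mono fun n h => h.1) (hbnd.mono fun n h => h.2)
  have hUplim : Tendsto (fun n =>
      Real.exp (cU n - ξ n) * (1 - ((d n:ℝ)-1)/(n:ℝ))⁻¹) atTop (𝓝 α) := by
    have := (hexp cU hcU).mul hrrinv
    simpa using this
  have hLolim : Tendsto (fun n => Real.exp (cL n - ξ n)) atTop (𝓝 α) := hexp cL hcL
  have hsand2 : ∀ᶠ n in atTop,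
      Real.exp (cL n - ξ n) ≤ betaDeriv n (d n) (muSeq n (d n) (lam n) (k-1))
      ∧ betaDeriv n (d n) (muSeq n (d n) (lam n) (k-1))
        ≤ Real.exp (cU n - ξ n) * (1 - ((d n:ℝ)-1)/(n:ℝ))⁻¹ := by
    filter_upwards [hbase, hD1,
      hδk0.eventually (eventually_le_nhds (by norm_num : (0:ℝ) < 1/4)),
      hrr0.eventually (eventually_le_nhds (by norm_num : (0:ℝ) < 1/2))]
      with n hb h1 hδs hrs
    obtain ⟨hn1, hd1, hdn⟩ := hb
    have hnp : (0:ℝ) < (n:ℝ) := by exact_mod_cast hn1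
    have hDp : (0:ℝ) < (d n:ℝ) := by linarith
    have hrpos : 0 < 1 - ((d n:ℝ)-1)/(n:ℝ) := rmargin_pos hn1 hdn
    have hrne : (1 - ((d n:ℝ)-1)/(n:ℝ)) ≠ 0 := ne_of_gt hrpos
    have hmu := muSeq_mem hn1 hdn (hlam n) (k-1)
    have hμ1 : muSeq n (d n) (lam n) (k-1) ≤ 1 := le_trans hmu.2 (hlam n).2.le
    have hμpos : (0:ℝ) < muSeq n (d n) (lam n) (k-1) := by linarith
    have hrhalf : (1:ℝ)/2 ≤ 1 - ((d n:ℝ)-1)/(n:ℝ) := by linarith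
    have hμr : ((d n:ℝ)-1)/(n:ℝ) < muSeq n (d n) (lam n) (k-1) := by linarith
    have hratio : (1 - muSeq n (d n) (lam n) (k-1))/(1 - ((d n:ℝ)-1)/(n:ℝ)) ≤ 1 := by
      rw [div_le_one hrpos]; linarith
    have hwhalf : (1 - muSeq n (d n) (lam n) (k-1))/(1 - ((d n:ℝ)-1)/(n:ℝ)) ≤ 1/2 := by
      rw [div_le_iff₀ hrpos]
      nlinarith
    have hwnn : 0 ≤ (1 - muSeq n (d n) (lam n) (k-1))/(1 - ((d n:ℝ)-1)/(n:ℝ)) :=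
      div_nonneg (by linarith) hrpos.le
    have hwpos : (0:ℝ) < 1 - (1 - muSeq n (d n) (lam n) (k-1))
        /(1 - ((d n:ℝ)-1)/(n:ℝ)) := by linarith
    have hdb := deriv_bounds n (d n) hn1 hd1 hdn
      (muSeq n (d n) (lam n) (k-1)) hμ1 hμr hratio
    have hexpU : Real.exp (cU n - ξ n) * (1 - ((d n:ℝ)-1)/(n:ℝ))⁻¹
        = (d n:ℝ) * ((1 - ((d n:ℝ)-1)/(n:ℝ))⁻¹
          * (muSeq n (d n) (lam n) (k-1))^(d n - 1)) := by
      rw [hcU' n, hGn n]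
      rw [show ξ n + Real.log (d n)
          + ((d n - 1:ℕ):ℝ)*Real.log (muSeq n (d n) (lam n) (k-1)) - ξ n
        = ((d n - 1:ℕ):ℝ)*Real.log (muSeq n (d n) (lam n) (k-1)) + Real.log (d n)
        from by ring]
      rw [Real.exp_add, Real.exp_nat_mul, Real.exp_log hμpos, Real.exp_log hDp]
      ring
    have hexpL : Real.exp (cL n - ξ n)
        = (d n:ℝ) * (1 - (1 - muSeq n (d n) (lam n) (k-1))
          /(1 - ((d n:ℝ)-1)/(n:ℝ)))^(d n - 1) := by
      rw [hcL' n, hGn n]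
      rw [show ξ n + Real.log (d n)
          + ((d n - 1:ℕ):ℝ)*Real.log (1 - (1 - muSeq n (d n) (lam n) (k-1))
            /(1 - ((d n:ℝ)-1)/(n:ℝ))) - ξ n
        = ((d n - 1:ℕ):ℝ)*Real.log (1 - (1 - muSeq n (d n) (lam n) (k-1))
            /(1 - ((d n:ℝ)-1)/(n:ℝ))) + Real.log (d n)
        from by ring]
      rw [Real.exp_add, Real.exp_nat_mul, Real.exp_log hwpos, Real.exp_log hDp]
      ring
    rw [hexpL, hexpU]
    exact ⟨hdb.1, hdb.2⟩
  exact tendsto_of_tendsto_of_tendsto_of_le_of_le' hLolim hUplim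
    (hsand2.mono fun n h => h.1) (hsand2.mono fun n h => h.2)
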